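/- arXiv:2401.03755 — 3 statements merged into one kernel-verified Lean document; each statement's English description precedes it below -/
import Mathlib

section
/- Let Q ∈ ℝ^{m×n} have full column rank and let D ∈ ℝ^{m×m} be a diagonal matrix with positive diagonal entries. Then the spectral norm of the weighted pseudoinverse satisfies ‖(QᵀDQ)⁻¹QᵀD‖₂ ≤ ‖Q⁺‖₂ · κ₂(D)^{1/2}, where Q⁺ is the Moore–Penrose pseudoinverse of Q and κ₂(D) = ‖D‖₂‖D⁻¹‖₂. -/
open Matrix

/-- Spectral (operator 2-)norm of a real matrix. -/
noncomputable def specNorm {α β : Type*} [Fintype α] [DecidableEq α] [Fintype β] [DecidableEq β]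
    (A : Matrix α β ℝ) : ℝ :=
  ‖LinearMap.toContinuousLinearMap (Matrix.toEuclideanLin A)‖

namespace SpecAux

/-- Euclidean norm of a plain function vector. -/
noncomputable def en {k : ℕ} (v : Fin k → ℝ) : ℝ := ‖(WithLp.equiv 2 (Fin k → ℝ)).symm v‖

lemma en_nonneg {k : ℕ} (v : Fin k → ℝ) : 0 ≤ en v := norm_nonneg _

lemma inner_eq_dot {k : ℕ} (v w : Fin k → ℝ) :
    (inner ℝ ((WithLp.equiv 2 (Fin k → ℝ)).symm v) ((WithLp.equiv 2 (Fin k → ℝ)).symm w) : ℝ)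
      = v ⬝ᵥ w := by
  simp [PiLp.inner_apply, dotProduct, RCLike.inner_apply, mul_comm]

lemma en_sq {k : ℕ} (v : Fin k → ℝ) : en v ^ 2 = v ⬝ᵥ v := by
  rw [en, ← real_inner_self_eq_norm_sq, inner_eq_dot]

lemma dot_le {k : ℕ} (v w : Fin k → ℝ) : v ⬝ᵥ w ≤ en v * en w := by
  rw [← inner_eq_dot]
  exact real_inner_le_norm _ _

lemma en_mulVec_le {k l : ℕ} (A : Matrix (Fin k) (Fin l) ℝ) (v : Fin l → ℝ) :
    en (A *ᵥ v) ≤ specNorm A * en v := by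
  have h := (LinearMap.toContinuousLinearMap (Matrix.toEuclideanLin A)).le_opNorm
    ((WithLp.equiv 2 (Fin l → ℝ)).symm v)
  simpa [en, specNorm, Matrix.toEuclideanLin_apply_piLp_toLp] using h

lemma specNorm_nonneg {k l : ℕ} (A : Matrix (Fin k) (Fin l) ℝ) : 0 ≤ specNorm A :=
  norm_nonneg _

lemma specNorm_le {k l : ℕ} (A : Matrix (Fin k) (Fin l) ℝ) {C : ℝ} (hC : 0 ≤ C)
    (h : ∀ v, en (A *ᵥ v) ≤ C * en v) : specNorm A ≤ C := by
  apply ContinuousLinearMap.opNorm_le_bound _ hC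
  intro x
  have hx : x = (WithLp.equiv 2 (Fin l → ℝ)).symm ((WithLp.equiv 2 (Fin l → ℝ)) x) := rfl
  rw [hx]
  have := h ((WithLp.equiv 2 (Fin l → ℝ)) x)
  simpa [en, Matrix.toEuclideanLin_apply_piLp_toLp, Matrix.toEuclideanLin_apply] using this

lemma dot_mulVec_mulVec {k l o : ℕ} (A : Matrix (Fin k) (Fin l) ℝ) (B : Matrix (Fin k) (Fin o) ℝ)
    (x : Fin l → ℝ) (y : Fin o → ℝ) :
    (A *ᵥ x) ⬝ᵥ (B *ᵥ y) = x ⬝ᵥ ((Aᵀ * B) *ᵥ y) := by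
  rw [dotProduct_mulVec, dotProduct_mulVec, ← vecMul_vecMul, vecMul_transpose]

lemma dot2 {k l : ℕ} (A : Matrix (Fin k) (Fin l) ℝ) (x : Fin l → ℝ) (w : Fin k → ℝ) :
    (A *ᵥ x) ⬝ᵥ w = x ⬝ᵥ (Aᵀ *ᵥ w) := by
  rw [dotProduct_comm, dotProduct_mulVec, dotProduct_comm, mulVec_transpose]

lemma inj_of_rank {m n : ℕ} (Q : Matrix (Fin m) (Fin n) ℝ) (hQ : Q.rank = n) :
    ∀ x, Q *ᵥ x = 0 → x = 0 := by
  have h := Q.mulVecLin.finrank_range_add_finrank_ker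
  rw [show Module.finrank ℝ (Fin n → ℝ) = n by simp] at h
  rw [Matrix.rank] at hQ
  have hker : Module.finrank ℝ (LinearMap.ker Q.mulVecLin) = 0 := by omega
  have hbot : LinearMap.ker Q.mulVecLin = ⊥ := Submodule.finrank_eq_zero.mp hker
  intro x hx
  have : x ∈ LinearMap.ker Q.mulVecLin := by simpa [Matrix.mulVecLin_apply] using hx
  simpa [hbot] using this

lemma posdef_aux {m n : ℕ} (Q : Matrix (Fin m) (Fin n) ℝ)
    (hinj : ∀ x, Q *ᵥ x = 0 → x = 0) (d : Fin m → ℝ) (hd : ∀ i, 0 < d i) :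
    (Qᵀ * Matrix.diagonal d * Q).PosDef := by
  refine Matrix.PosDef.of_dotProduct_mulVec_pos ?_ ?_
  · show (Qᵀ * Matrix.diagonal d * Q)ᴴ = _
    rw [show (Qᵀ * Matrix.diagonal d * Q)ᴴ = (Qᵀ * Matrix.diagonal d * Q)ᵀ from rfl]
    rw [transpose_mul, transpose_mul, transpose_transpose, diagonal_transpose, ← Matrix.mul_assoc]
  · intro x hx
    have hx' : Q *ᵥ x ≠ 0 := fun h => hx (hinj x h)
    have key : star x ⬝ᵥ ((Qᵀ * Matrix.diagonal d * Q) *ᵥ x)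
        = (Q *ᵥ x) ⬝ᵥ (Matrix.diagonal d *ᵥ (Q *ᵥ x)) := by
      rw [star_trivial, mulVec_mulVec, dot_mulVec_mulVec, ← Matrix.mul_assoc]
    rw [key]
    obtain ⟨i, hi⟩ := Function.ne_iff.mp hx'
    rw [dotProduct]
    apply Finset.sum_pos'
    · intro j _
      rw [mulVec_diagonal]
      have := mul_self_nonneg ((Q *ᵥ x) j)
      nlinarith [(hd j).le, mul_self_nonneg ((Q *ᵥ x) j)]
    · refine ⟨i, Finset.mem_univ i, ?_⟩
      rw [mulVec_diagonal]
      have h1 : 0 < (Q *ᵥ x) i * (Q *ᵥ x) i := by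
        rcases lt_or_gt_of_ne (show (Q *ᵥ x) i ≠ 0 from hi) with h | h <;> nlinarith
      nlinarith [hd i]

end SpecAux

open SpecAux in
/-- Bound on the weighted pseudoinverse:
`‖(QᵀDQ)⁻¹QᵀD‖₂ ≤ ‖Q⁺‖₂ · κ₂(D)^{1/2}` where `Q⁺ = (QᵀQ)⁻¹Qᵀ` and `κ₂(D) = ‖D‖₂‖D⁻¹‖₂`. -/
theorem stmt_0 (m n : ℕ) (hmn : n ≤ m) (Q : Matrix (Fin m) (Fin n) ℝ)
    (hQ : Q.rank = n) (d : Fin m → ℝ) (hd : ∀ i, 0 < d i) :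
    specNorm ((Qᵀ * Matrix.diagonal d * Q)⁻¹ * Qᵀ * Matrix.diagonal d) ≤
      specNorm ((Qᵀ * Q)⁻¹ * Qᵀ) *
        Real.sqrt (specNorm (Matrix.diagonal d) * specNorm (Matrix.diagonal d)⁻¹) := by
  classical
  set D := Matrix.diagonal d with hD
  set S := Matrix.diagonal (fun i => Real.sqrt (d i)) with hSdef
  set S' := Matrix.diagonal (fun i => (Real.sqrt (d i))⁻¹) with hS'def
  have hsq_pos : ∀ i, 0 < Real.sqrt (d i) := fun i => Real.sqrt_pos.mpr (hd i)
  have hSS : S * S = D := by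
    have h : (fun i => Real.sqrt (d i) * Real.sqrt (d i)) = d :=
      funext fun i => Real.mul_self_sqrt (hd i).le
    rw [hD, hSdef, diagonal_mul_diagonal, h]
  have hS'S : S' * S = 1 := by
    have h : (fun i => (Real.sqrt (d i))⁻¹ * Real.sqrt (d i)) = fun _ : Fin m => (1:ℝ) :=
      funext fun i => inv_mul_cancel₀ (hsq_pos i).ne'
    rw [hS'def, hSdef, diagonal_mul_diagonal, h, Matrix.diagonal_one]
  have hS'S' : D⁻¹ = S' * S' := by
    apply Matrix.inv_eq_right_inv
    have h : (fun i => d i * ((Real.sqrt (d i))⁻¹ * (Real.sqrt (d i))⁻¹))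
        = fun _ : Fin m => (1:ℝ) := by
      funext i
      rw [← mul_inv, Real.mul_self_sqrt (hd i).le, mul_inv_cancel₀ (hd i).ne']
    rw [hD, hS'def, diagonal_mul_diagonal, diagonal_mul_diagonal, h, Matrix.diagonal_one]
  -- norm bounds via square roots
  have hSb : ∀ v : Fin m → ℝ, en (S *ᵥ v) ≤ Real.sqrt (specNorm D) * en v := by
    intro v
    have h1 : en (S *ᵥ v) ^ 2 ≤ specNorm D * en v ^ 2 := by
      rw [en_sq, dot_mulVec_mulVec, hSdef, diagonal_transpose, ← hSdef, hSS]
      calc v ⬝ᵥ (D *ᵥ v) ≤ en v * en (D *ᵥ v) := dot_le _ _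
        _ ≤ en v * (specNorm D * en v) :=
            mul_le_mul_of_nonneg_left (en_mulVec_le _ _) (en_nonneg _)
        _ = specNorm D * en v ^ 2 := by ring
    calc en (S *ᵥ v) ≤ Real.sqrt (specNorm D * en v ^ 2) := Real.le_sqrt_of_sq_le h1
      _ = Real.sqrt (specNorm D) * en v := by
          rw [Real.sqrt_mul (specNorm_nonneg _), Real.sqrt_sq (en_nonneg _)]
  have hS'b : ∀ v : Fin m → ℝ, en (S' *ᵥ v) ≤ Real.sqrt (specNorm D⁻¹) * en v := by
    intro v
    have h1 : en (S' *ᵥ v) ^ 2 ≤ specNorm D⁻¹ * en v ^ 2 := by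
      rw [en_sq, dot_mulVec_mulVec, hS'def, diagonal_transpose, ← hS'def, ← hS'S']
      calc v ⬝ᵥ (D⁻¹ *ᵥ v) ≤ en v * en (D⁻¹ *ᵥ v) := dot_le _ _
        _ ≤ en v * (specNorm D⁻¹ * en v) :=
            mul_le_mul_of_nonneg_left (en_mulVec_le _ _) (en_nonneg _)
        _ = specNorm D⁻¹ * en v ^ 2 := by ring
    calc en (S' *ᵥ v) ≤ Real.sqrt (specNorm D⁻¹ * en v ^ 2) := Real.le_sqrt_of_sq_le h1
      _ = Real.sqrt (specNorm D⁻¹) * en v := by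
          rw [Real.sqrt_mul (specNorm_nonneg _), Real.sqrt_sq (en_nonneg _)]
  -- invertibility
  have hinj := inj_of_rank Q hQ
  have hpd : (Qᵀ * D * Q).PosDef := posdef_aux Q hinj d hd
  have hpd1 : (Qᵀ * Q).PosDef := by
    have := posdef_aux Q hinj (fun _ => 1) (fun _ => one_pos)
    simpa using this
  have hdet : IsUnit (Qᵀ * D * Q).det := (Matrix.isUnit_iff_isUnit_det _).mp hpd.isUnit
  have hdet1 : IsUnit (Qᵀ * Q).det := (Matrix.isUnit_iff_isUnit_det _).mp hpd1.isUnit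
  set P := (Qᵀ * Q)⁻¹ * Qᵀ with hP
  -- main bound
  apply specNorm_le
  · exact mul_nonneg (specNorm_nonneg _) (Real.sqrt_nonneg _)
  intro x
  set y := ((Qᵀ * D * Q)⁻¹ * Qᵀ * D) *ᵥ x with hy
  -- key identity
  have h1 : (Qᵀ * D * Q) *ᵥ y = (Qᵀ * D) *ᵥ x := by
    rw [hy, mulVec_mulVec]
    congr 1
    rw [show (Qᵀ * D * Q)⁻¹ * Qᵀ * D = (Qᵀ * D * Q)⁻¹ * (Qᵀ * D) from by rw [Matrix.mul_assoc]]
    rw [← Matrix.mul_assoc, Matrix.mul_nonsing_inv _ hdet, Matrix.one_mul]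
  -- Step 1
  have step1 : en (S *ᵥ (Q *ᵥ y)) ≤ en (S *ᵥ x) := by
    have hsq : en (S *ᵥ (Q *ᵥ y)) ^ 2 ≤ en (S *ᵥ (Q *ᵥ y)) * en (S *ᵥ x) := by
      have e1 : en (S *ᵥ (Q *ᵥ y)) ^ 2 = (S *ᵥ (Q *ᵥ y)) ⬝ᵥ (S *ᵥ x) := by
        rw [en_sq, dot_mulVec_mulVec, hSdef, diagonal_transpose, ← hSdef, hSS]
        rw [dot2, mulVec_mulVec, mulVec_mulVec, h1]
        rw [← mulVec_mulVec, ← dot2, ← hSS, ← mulVec_mulVec]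
        rw [dot2 S (Q *ᵥ y), hSdef, diagonal_transpose, ← hSdef]
      rw [e1]
      exact dot_le _ _
    rcases eq_or_lt_of_le (en_nonneg (S *ᵥ (Q *ᵥ y))) with h | h
    · rw [← h]; exact en_nonneg _
    · nlinarith [hsq]
  -- Step 2
  have step2 : en (Q *ᵥ y) ≤ Real.sqrt (specNorm D⁻¹) * en (S *ᵥ (Q *ᵥ y)) := by
    have e : S' *ᵥ (S *ᵥ (Q *ᵥ y)) = Q *ᵥ y := by
      rw [mulVec_mulVec (Q *ᵥ y) S' S, hS'S, one_mulVec]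
    have h := hS'b (S *ᵥ (Q *ᵥ y))
    rwa [e] at h
  -- Step 3
  have step3 : en y ≤ specNorm P * en (Q *ᵥ y) := by
    have e : P *ᵥ (Q *ᵥ y) = y := by
      rw [mulVec_mulVec y P Q, hP, Matrix.mul_assoc, Matrix.nonsing_inv_mul _ hdet1,
        one_mulVec]
    have h := en_mulVec_le P (Q *ᵥ y)
    rwa [e] at h
  -- combine
  have hS_x : en (S *ᵥ x) ≤ Real.sqrt (specNorm D) * en x := hSb x
  have hQy : en (Q *ᵥ y) ≤ Real.sqrt (specNorm D⁻¹) * (Real.sqrt (specNorm D) * en x) := by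
    calc en (Q *ᵥ y) ≤ Real.sqrt (specNorm D⁻¹) * en (S *ᵥ (Q *ᵥ y)) := step2
      _ ≤ Real.sqrt (specNorm D⁻¹) * en (S *ᵥ x) :=
          mul_le_mul_of_nonneg_left step1 (Real.sqrt_nonneg _)
      _ ≤ Real.sqrt (specNorm D⁻¹) * (Real.sqrt (specNorm D) * en x) :=
          mul_le_mul_of_nonneg_left hS_x (Real.sqrt_nonneg _)
  calc en y ≤ specNorm P * en (Q *ᵥ y) := step3
    _ ≤ specNorm P * (Real.sqrt (specNorm D⁻¹) * (Real.sqrt (specNorm D) * en x)) :=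
        mul_le_mul_of_nonneg_left hQy (specNorm_nonneg _)
    _ = specNorm P * Real.sqrt (specNorm D * specNorm D⁻¹) * en x := by
        rw [Real.sqrt_mul (specNorm_nonneg _)]
        ring
end

section
/- Let M = [[αD⁻¹, QR],[RᵀQᵀ, 0]] where D is diagonal positive, α ≠ 0, Q ∈ ℝ^{m×n} has orthonormal columns, and R ∈ ℝ^{n×n} is invertible. Then M is invertible with inverse M⁻¹ = [[α⁻¹(D − DQ(QᵀDQ)⁻¹QᵀD), DQ(QᵀDQ)⁻¹R⁻ᵀ],[R⁻¹(QᵀDQ)⁻¹QᵀD, −αR⁻¹(QᵀDQ)⁻¹R⁻ᵀ]]. -/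
open Matrix

/-- Explicit inverse of the augmented preconditioner
`M = [[αD⁻¹, QR],[RᵀQᵀ, 0]]`. -/
theorem stmt_5 (m n : ℕ) (hmn : n ≤ m) (d : Fin m → ℝ) (hd : ∀ i, 0 < d i)
    (α : ℝ) (hα : α ≠ 0) (Q : Matrix (Fin m) (Fin n) ℝ) (hQ : Qᵀ * Q = 1)
    (R : Matrix (Fin n) (Fin n) ℝ) (hR : IsUnit R.det) :
    let D : Matrix (Fin m) (Fin m) ℝ := Matrix.diagonal d
    let M := Matrix.fromBlocks (α • D⁻¹) (Q * R) (Rᵀ * Qᵀ) 0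
    let N := Matrix.fromBlocks
      (α⁻¹ • (D - D * Q * (Qᵀ * D * Q)⁻¹ * Qᵀ * D))
      (D * Q * (Qᵀ * D * Q)⁻¹ * (Rᵀ)⁻¹)
      (R⁻¹ * (Qᵀ * D * Q)⁻¹ * Qᵀ * D)
      (-(α • (R⁻¹ * (Qᵀ * D * Q)⁻¹ * (Rᵀ)⁻¹)))
    M * N = 1 ∧ N * M = 1 := by
  intro D M N
  have hDpd : D.PosDef := Matrix.PosDef.diagonal hd
  set S : Matrix (Fin n) (Fin n) ℝ := Qᵀ * D * Q with hSdef
  have hSpd : S.PosDef := by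
    rw [Matrix.posDef_iff_dotProduct_mulVec]
    constructor
    · exact Matrix.isHermitian_conjTranspose_mul_mul Q hDpd.isHermitian
    · intro x hx
      have hQx : Q *ᵥ x ≠ 0 := by
        intro h
        apply hx
        have : Qᵀ *ᵥ (Q *ᵥ x) = x := by
          rw [Matrix.mulVec_mulVec, hQ, Matrix.one_mulVec]
        rw [h, Matrix.mulVec_zero] at this
        exact this.symm
      have hpos := hDpd.dotProduct_mulVec_pos hQx
      have key : star x ⬝ᵥ S *ᵥ x = star (Q *ᵥ x) ⬝ᵥ D *ᵥ (Q *ᵥ x) := by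
        simp only [star_trivial]
        rw [hSdef, ← Matrix.mulVec_mulVec, ← Matrix.mulVec_mulVec,
          Matrix.dotProduct_mulVec, Matrix.vecMul_transpose]
      rw [key]
      exact hpos
  have hSunit : IsUnit S.det := hSpd.det_pos.ne'.isUnit
  have hS1 : S * S⁻¹ = 1 := Matrix.mul_nonsing_inv S hSunit
  have hDdet : IsUnit D.det := hDpd.det_pos.ne'.isUnit
  have hD1 : D⁻¹ * D = 1 := Matrix.nonsing_inv_mul D hDdet
  have hR1 : R * R⁻¹ = 1 := Matrix.mul_nonsing_inv R hR
  have hRT : IsUnit Rᵀ.det := by rwa [Matrix.det_transpose]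
  have hRT1 : Rᵀ * (Rᵀ)⁻¹ = 1 := Matrix.mul_nonsing_inv _ hRT
  -- helper cancellation lemmas
  have hDl : ∀ {k : Type} (X : Matrix (Fin m) k ℝ), D⁻¹ * (D * X) = X := fun X => by
    rw [← Matrix.mul_assoc, hD1, Matrix.one_mul]
  have hRl : ∀ {k : Type} (X : Matrix (Fin n) k ℝ), R * (R⁻¹ * X) = X := fun X => by
    rw [← Matrix.mul_assoc, hR1, Matrix.one_mul]
  have hMN : M * N = 1 := by
    show Matrix.fromBlocks (α • D⁻¹) (Q * R) (Rᵀ * Qᵀ) 0 *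
      Matrix.fromBlocks (α⁻¹ • (D - D * Q * S⁻¹ * Qᵀ * D)) (D * Q * S⁻¹ * (Rᵀ)⁻¹)
        (R⁻¹ * S⁻¹ * Qᵀ * D) (-(α • (R⁻¹ * S⁻¹ * (Rᵀ)⁻¹))) = 1
    rw [Matrix.fromBlocks_multiply, ← Matrix.fromBlocks_one]
    rw [Matrix.fromBlocks_inj]
    refine ⟨?_, ?_, ?_, ?_⟩
    · -- top-left
      rw [Matrix.smul_mul, Matrix.mul_smul, smul_smul, mul_inv_cancel₀ hα, one_smul]
      have e1 : D⁻¹ * (D - D * Q * S⁻¹ * Qᵀ * D) = 1 - Q * (S⁻¹ * (Qᵀ * D)) := by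
        rw [Matrix.mul_sub, hD1]
        congr 1
        rw [show D * Q * S⁻¹ * Qᵀ * D = D * (Q * (S⁻¹ * (Qᵀ * D))) by
          simp only [Matrix.mul_assoc]]
        exact hDl _
      have e2 : Q * R * (R⁻¹ * S⁻¹ * Qᵀ * D) = Q * (S⁻¹ * (Qᵀ * D)) := by
        rw [show Q * R * (R⁻¹ * S⁻¹ * Qᵀ * D) = Q * (R * (R⁻¹ * (S⁻¹ * (Qᵀ * D)))) by
          simp only [Matrix.mul_assoc], hRl]
      rw [e1, e2, sub_add_cancel]
    · -- top-right
      rw [Matrix.mul_neg, Matrix.mul_smul, Matrix.smul_mul]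
      have e1 : D⁻¹ * (D * Q * S⁻¹ * (Rᵀ)⁻¹) = Q * (S⁻¹ * (Rᵀ)⁻¹) := by
        rw [show D * Q * S⁻¹ * (Rᵀ)⁻¹ = D * (Q * (S⁻¹ * (Rᵀ)⁻¹)) by
          simp only [Matrix.mul_assoc]]
        exact hDl _
      have e2 : Q * R * (R⁻¹ * S⁻¹ * (Rᵀ)⁻¹) = Q * (S⁻¹ * (Rᵀ)⁻¹) := by
        rw [show Q * R * (R⁻¹ * S⁻¹ * (Rᵀ)⁻¹) = Q * (R * (R⁻¹ * (S⁻¹ * (Rᵀ)⁻¹))) by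
          simp only [Matrix.mul_assoc], hRl]
      rw [e1, e2, add_neg_cancel]
    · -- bottom-left
      rw [Matrix.mul_smul, Matrix.zero_mul, add_zero]
      have : Rᵀ * Qᵀ * (D - D * Q * S⁻¹ * Qᵀ * D) = 0 := by
        rw [Matrix.mul_sub]
        rw [show Rᵀ * Qᵀ * (D * Q * S⁻¹ * Qᵀ * D) = Rᵀ * ((Qᵀ * D * Q) * S⁻¹) * (Qᵀ * D) by
          simp only [Matrix.mul_assoc], ← hSdef, hS1, Matrix.mul_one]
        simp only [Matrix.mul_assoc]
        exact sub_self _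
      rw [this, smul_zero]
    · -- bottom-right
      rw [Matrix.zero_mul, add_zero]
      rw [show Rᵀ * Qᵀ * (D * Q * S⁻¹ * (Rᵀ)⁻¹) = Rᵀ * ((Qᵀ * D * Q) * S⁻¹) * (Rᵀ)⁻¹ by
        simp only [Matrix.mul_assoc], ← hSdef, hS1, Matrix.mul_one, hRT1]
  exact ⟨hMN, mul_eq_one_comm.mp hMN⟩
end

section
/- Let A ∈ ℝ^{m×n} have full column rank, D diagonal positive, α > 0, and Ĉ = α⁻¹AᵀDA. Then the left-preconditioned matrix M_b⁻¹Ã, where M_b = diag(αD⁻¹, Ĉ) and à = [[αD⁻¹, A],[Aᵀ, 0]], equals M_b⁻¹à = [[I, α⁻¹DA],[α(AᵀDA)⁻¹Aᵀ, 0]], and every eigenvalue of M_b⁻¹à belongs to the set {1, (1+√5)/2, (1−√5)/2}. -/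
open Matrix Polynomial

/-- With the exact Schur complement `Ĉ = α⁻¹AᵀDA`, the left-preconditioned matrix is
`M_b⁻¹Ã = [[I, α⁻¹DA],[α(AᵀDA)⁻¹Aᵀ, 0]]` and its spectrum is contained in
`{1, (1+√5)/2, (1-√5)/2}`. -/
theorem stmt_14 (m n : ℕ) (hmn : n ≤ m) (A : Matrix (Fin m) (Fin n) ℝ)
    (hA : A.rank = n) (d : Fin m → ℝ) (hd : ∀ i, 0 < d i) (α : ℝ) (hα : 0 < α) :
    let D : Matrix (Fin m) (Fin m) ℝ := Matrix.diagonal d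
    let Mb := Matrix.fromBlocks (α • D⁻¹) 0 0 (α⁻¹ • (Aᵀ * D * A))
    let At := Matrix.fromBlocks (α • D⁻¹) A Aᵀ 0
    Mb⁻¹ * At =
        Matrix.fromBlocks 1 (α⁻¹ • (D * A)) (α • ((Aᵀ * D * A)⁻¹ * Aᵀ)) 0 ∧
      spectrum ℝ (Mb⁻¹ * At) ⊆
        {1, (1 + Real.sqrt 5) / 2, (1 - Real.sqrt 5) / 2} := by
  intro D Mb At
  set S : Matrix (Fin n) (Fin n) ℝ := Aᵀ * D * A with hS
  have hDdet : IsUnit D.det := by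
    rw [show D = Matrix.diagonal d from rfl, Matrix.det_diagonal, isUnit_iff_ne_zero]
    exact Finset.prod_ne_zero_iff.mpr fun i _ => (hd i).ne'
  have hD1 : D⁻¹ * D = 1 := Matrix.nonsing_inv_mul _ hDdet
  have hD2 : D * D⁻¹ = 1 := Matrix.mul_nonsing_inv _ hDdet
  have hinj : Function.Injective A.mulVecLin := by
    rw [← LinearMap.ker_eq_bot]
    have h1 := LinearMap.finrank_range_add_finrank_ker A.mulVecLin
    have h2 : Module.finrank ℝ (LinearMap.range A.mulVecLin) = n := hA
    rw [h2] at h1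
    simp only [Module.finrank_pi, Fintype.card_fin] at h1
    have h3 : Module.finrank ℝ (LinearMap.ker A.mulVecLin) = 0 := by omega
    exact Submodule.finrank_eq_zero.mp h3
  have hpos : S.PosDef := by
    rw [Matrix.posDef_iff_dotProduct_mulVec]
    constructor
    · rw [Matrix.IsHermitian, Matrix.conjTranspose_eq_transpose_of_trivial, hS,
        Matrix.transpose_mul, Matrix.transpose_mul, Matrix.transpose_transpose,
        Matrix.diagonal_transpose, Matrix.mul_assoc]
    · intro x hx
      have hAx : A *ᵥ x ≠ 0 := fun h => hx (hinj (by simpa using h))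
      have hq : dotProduct (star x) (S *ᵥ x) = ∑ i, (A *ᵥ x) i * (d i * (A *ᵥ x) i) := by
        rw [hS, ← Matrix.mulVec_mulVec, ← Matrix.mulVec_mulVec,
          show (star x) = x from rfl,
          dotProduct_mulVec, Matrix.vecMul_transpose]
        simp [dotProduct, ← Matrix.mulVec_mulVec, show D = Matrix.diagonal d from rfl, Matrix.mulVec_diagonal]
      rw [hq]
      obtain ⟨j, hj⟩ := Function.ne_iff.mp hAx
      exact Finset.sum_pos' (fun i _ => by nlinarith [hd i, mul_self_nonneg ((A *ᵥ x) i)])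
        ⟨j, Finset.mem_univ j, by nlinarith [hd j, mul_self_pos.mpr hj]⟩
  have hSdet : IsUnit S.det := (Matrix.isUnit_iff_isUnit_det S).mp hpos.isUnit
  have hS1 : S⁻¹ * S = 1 := Matrix.nonsing_inv_mul _ hSdet
  have hS2 : S * S⁻¹ = 1 := Matrix.mul_nonsing_inv _ hSdet
  -- inverse of the block preconditioner
  have hMb : Mb⁻¹ = Matrix.fromBlocks (α⁻¹ • D) 0 0 (α • S⁻¹) := by
    apply Matrix.inv_eq_right_inv
    rw [show Mb = Matrix.fromBlocks (α • D⁻¹) (0 : Matrix (Fin m) (Fin n) ℝ)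
        (0 : Matrix (Fin n) (Fin m) ℝ) (α⁻¹ • S) from rfl, Matrix.fromBlocks_multiply]
    simp [Matrix.smul_mul, Matrix.mul_smul, smul_smul, mul_inv_cancel₀ hα.ne',
      inv_mul_cancel₀ hα.ne', hD1, hD2, hS1, hS2, ← Matrix.fromBlocks_one]
  set B : Matrix (Fin m) (Fin n) ℝ := α⁻¹ • (D * A) with hB
  set C : Matrix (Fin n) (Fin m) ℝ := α • (S⁻¹ * Aᵀ) with hC
  have hblock : Mb⁻¹ * At = Matrix.fromBlocks 1 B C 0 := by
    rw [hMb, show At = Matrix.fromBlocks (α • D⁻¹) A Aᵀ (0 : Matrix (Fin n) (Fin n) ℝ) from rfl,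
      Matrix.fromBlocks_multiply]
    simp [Matrix.smul_mul, Matrix.mul_smul, smul_smul, inv_mul_cancel₀ hα.ne',
      mul_inv_cancel₀ hα.ne', hD1, hD2, hB, hC]
  refine ⟨hblock, ?_⟩
  rw [hblock]
  set T : Matrix (Fin m ⊕ Fin n) (Fin m ⊕ Fin n) ℝ := Matrix.fromBlocks 1 B C 0 with hT
  -- block identities
  have hcore : (S⁻¹ * Aᵀ) * (D * A) = 1 := by
    rw [Matrix.mul_assoc S⁻¹ Aᵀ (D * A), ← Matrix.mul_assoc Aᵀ D A, ← hS, hS1]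
  have hCB : C * B = 1 := by
    rw [hB, hC, Matrix.smul_mul, Matrix.mul_smul, smul_smul, mul_inv_cancel₀ hα.ne',
      one_smul, hcore]
  set P : Matrix (Fin m) (Fin m) ℝ := (D * A) * (S⁻¹ * Aᵀ) with hP
  have hBC : B * C = P := by
    rw [hB, hC, Matrix.smul_mul, Matrix.mul_smul, smul_smul, inv_mul_cancel₀ hα.ne',
      one_smul, hP]
  have hPB : P * B = B := by
    rw [hP, hB, Matrix.mul_smul, Matrix.mul_assoc, hcore, Matrix.mul_one]
  have hT2 : T * T = Matrix.fromBlocks (1 + P) B C 1 := by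
    rw [hT, Matrix.fromBlocks_multiply]
    simp [hBC, hCB]
  have hT3 : T * T * T = Matrix.fromBlocks (1 + P + P) (B + B) (C + C) 1 := by
    rw [hT2, hT, Matrix.fromBlocks_multiply]
    simp [Matrix.add_mul, hBC, hCB, hPB]
  have key : T * T * T + 1 = T * T + T * T := by
    rw [hT3, hT2, ← Matrix.fromBlocks_one, Matrix.fromBlocks_add, Matrix.fromBlocks_add]
    exact Matrix.fromBlocks_inj.mpr ⟨by abel, by abel, by abel, by abel⟩
  set p : ℝ[X] := X ^ 3 - 2 * X ^ 2 + 1 with hp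
  have hp0 : Polynomial.aeval T p = 0 := by
    rw [hp]
    simp only [map_add, map_sub, _root_.map_mul, map_pow, aeval_X, _root_.map_one,
      _root_.map_ofNat]
    have h3 : T ^ 3 = T * T * T := by rw [pow_succ, pow_two]
    have h2 : (2 : Matrix (Fin m ⊕ Fin n) (Fin m ⊕ Fin n) ℝ) * T ^ 2 = T * T + T * T := by
      rw [pow_two, two_mul]
    rw [h3, h2, sub_add_eq_add_sub, sub_eq_zero, key]
  intro μ hμ
  have hmem : Polynomial.eval μ p ∈ spectrum ℝ (Polynomial.aeval T p) :=
    spectrum.subset_polynomial_aeval T p ⟨μ, hμ, rfl⟩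
  rw [hp0] at hmem
  have h0 : Polynomial.eval μ p = 0 := by
    by_contra h
    apply spectrum.mem_iff.mp hmem
    rw [sub_zero]
    exact (algebraMap ℝ (Matrix (Fin m ⊕ Fin n) (Fin m ⊕ Fin n) ℝ)).isUnit_map
      (isUnit_iff_ne_zero.mpr h)
  have h0' : μ ^ 3 - 2 * μ ^ 2 + 1 = 0 := by
    have he : Polynomial.eval μ p = μ ^ 3 - 2 * μ ^ 2 + 1 := by simp [hp]
    rw [he] at h0
    linarith
  have h5 : Real.sqrt 5 ^ 2 = 5 := Real.sq_sqrt (by norm_num)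
  have hfac : (μ - 1) * ((2 * μ - 1 - Real.sqrt 5) * (2 * μ - 1 + Real.sqrt 5)) = 0 := by
    linear_combination 4 * h0' - (μ - 1) * h5
  simp only [Set.mem_insert_iff, Set.mem_singleton_iff]
  rcases mul_eq_zero.mp hfac with h | h
  · exact Or.inl (by linarith)
  · rcases mul_eq_zero.mp h with h' | h'
    · exact Or.inr (Or.inl (by linarith))
    · exact Or.inr (Or.inr (by linarith))
end
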